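/- arXiv:2207.13877 — 2 statements merged into one kernel-verified Lean document; each statement's English description precedes it below -/
import Mathlib

section
/- Let Q and P be probability distributions on the finite set {0,1}^n with P(v) > 0 for all v, and suppose the Kullback–Leibler divergence KL(Q ∣ P) = Σ_v Q(v) ln(Q(v)/P(v)) is strictly positive. Then there exists a vector ŵ ∈ R^n such that Σ_v exp(⟨ŵ, v⟩) (P(v) - Q(v)) < 0. -/
/-!
Since `P` and `Q` have the same total mass and `KL(Q ∣ P) ≠ 0`, they differ, so `P v̂ < Q v̂` for
some `v̂`. For `σ k = ±1` according to `v̂ k`, the score `⟨σ, v⟩` has its unique maximum at `v = v̂`;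
hence as `α → ∞` the weights `exp ⟨α σ, v⟩` concentrate on `v̂`, and the sign of
`Σ_v exp ⟨α σ, v⟩ (P v - Q v)` becomes that of `P v̂ - Q v̂ < 0`.
-/

open Finset Real Filter Topology

theorem exists_lt_of_sum_eq_of_sum_mul_log_div_pos {ι : Type*} [Fintype ι] {P Q : ι → ℝ}
    (hsum : ∑ i, P i = ∑ i, Q i) (hKL : 0 < ∑ i, Q i * log (Q i / P i)) : ∃ i, P i < Q i := by
  by_contra! hQP
  have hPQ : ∀ i, P i = Q i := fun i =>
    ((sum_eq_sum_iff_of_le fun i _ => hQP i).1 hsum.symm i (mem_univ i)).symm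
  simp [hPQ] at hKL

theorem eventually_sum_exp_mul_mul_neg {ι : Type*} [Fintype ι] [DecidableEq ι] {f s : ι → ℝ}
    {i₀ : ι} (hf : f i₀ < 0) (hs : ∀ i ≠ i₀, s i < s i₀) :
    ∀ᶠ α in atTop, ∑ i, exp (α * s i) * f i < 0 := by
  have hterm : ∀ i, Tendsto (fun α => exp (α * (s i - s i₀)) * f i) atTop
      (𝓝 (if i = i₀ then f i₀ else 0)) := by
    intro i
    split_ifs with hi
    · simp [hi]
    · have hexp := tendsto_exp_atBot.comp
        (tendsto_id.atTop_mul_const_of_neg (sub_neg.2 (hs i hi)))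
      simpa using hexp.mul_const (f i)
  have hsum := tendsto_finsetSum univ fun i _ => hterm i
  rw [sum_ite_eq' univ i₀, if_pos (mem_univ i₀)] at hsum
  filter_upwards [hsum.eventually (gt_mem_nhds hf)] with α hα
  have hfactor : ∑ i, exp (α * s i) * f i
      = exp (α * s i₀) * ∑ i, exp (α * (s i - s i₀)) * f i := by
    rw [mul_sum]
    refine sum_congr rfl fun i _ => ?_
    rw [← mul_assoc, ← exp_add]
    ring_nf
  rw [hfactor]
  exact mul_neg_of_pos_of_neg (exp_pos _) hα

theorem sum_sign_mul_indicator_lt_of_ne {n : ℕ} {u v : Fin n → Bool} (h : v ≠ u) :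
    ∑ k, (if u k then 1 else -1) * (if v k then (1 : ℝ) else 0)
      < ∑ k, (if u k then 1 else -1) * (if u k then (1 : ℝ) else 0) := by
  obtain ⟨k₀, hk₀⟩ := Function.ne_iff.1 h
  refine sum_lt_sum (fun k _ => ?_) ⟨k₀, mem_univ k₀, ?_⟩
  · cases u k <;> cases v k <;> norm_num
  · cases hu : u k₀ <;> cases hv : v k₀ <;> simp_all

theorem exists_weight_vector_negative_correlation_general (n : ℕ)
    (Q P : (Fin n → Bool) → ℝ)
    (hQ1 : ∑ v : Fin n → Bool, Q v = 1)
    (hP1 : ∑ v : Fin n → Bool, P v = 1)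
    (hKL : 0 < ∑ v : Fin n → Bool, Q v * Real.log (Q v / P v)) :
    ∃ w : Fin n → ℝ,
      ∑ v : Fin n → Bool,
        Real.exp (∑ k, w k * (if v k then (1 : ℝ) else 0)) * (P v - Q v) < 0 := by
  obtain ⟨v₀, hv₀⟩ := exists_lt_of_sum_eq_of_sum_mul_log_div_pos (hP1.trans hQ1.symm) hKL
  set σ : Fin n → ℝ := fun k => if v₀ k then 1 else -1
  obtain ⟨α, hα⟩ := (eventually_sum_exp_mul_mul_neg (f := fun v => P v - Q v)
    (s := fun v => ∑ k, σ k * (if v k then (1 : ℝ) else 0)) (sub_neg.2 hv₀)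
    fun v hv => sum_sign_mul_indicator_lt_of_ne hv).exists
  refine ⟨fun k => α * σ k, ?_⟩
  simpa only [mul_sum, mul_assoc] using hα

theorem exists_weight_vector_negative_correlation (n : ℕ)
    (Q P : (Fin n → Bool) → ℝ)
    (hQ0 : ∀ v, 0 ≤ Q v) (hQ1 : ∑ v : Fin n → Bool, Q v = 1)
    (hP0 : ∀ v, 0 < P v) (hP1 : ∑ v : Fin n → Bool, P v = 1)
    (hKL : 0 < ∑ v : Fin n → Bool, Q v * Real.log (Q v / P v)) :
    ∃ w : Fin n → ℝ,
      ∑ v : Fin n → Bool,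
        Real.exp (∑ k, w k * (if v k then (1 : ℝ) else 0)) * (P v - Q v) < 0 :=
  exists_weight_vector_negative_correlation_general n Q P hQ1 hP1 hKL
end

section
/- Let Q and P be probability distributions on a finite set S with P(v) > 0 for all v, let v̂ ∈ S with 0 < Q(v̂) < 1 and P(v̂) < Q(v̂), and for λ ∈ R define P_λ(v) = (1 + e^λ 1_{v=v̂}) P(v)/(1 + e^λ P(v̂)). Then there exists λ ∈ R such that KL(Q ∣ P_λ) < KL(Q ∣ P). -/
/-!
Multiplying the weight of `v̂` by `1 + t` (with `t = e^λ`) and renormalising changes the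
divergence by `log (1 + t P(v̂)) - Q(v̂) log (1 + t)`. Since `log (1 + x) ≤ x` and
`log (1 + t) ≥ t / (1 + t)`, this is negative as soon as `P(v̂) (1 + t) < Q(v̂)`, which holds for
`t = (Q(v̂) - P(v̂)) / (2 P(v̂))`.
-/

open Finset Real

theorem mul_log_div_reweight_eq (q p a b : ℝ) (hp : p ≠ 0) (ha : a ≠ 0) (hb : b ≠ 0) :
    q * log (q / (a * p / b)) = q * log (q / p) + q * (log b - log a) := by
  rcases eq_or_ne q 0 with rfl | hq
  · simp
  rw [div_div_eq_mul_div, log_div (mul_ne_zero hq hb) (mul_ne_zero ha hp), log_mul hq hb,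
    log_mul ha hp, log_div hq hp]
  ring

theorem sum_mul_log_div_reweight_eq {ι : Type*} (s : Finset ι) (Q P A : ι → ℝ) (B : ℝ)
    (hP : ∀ v ∈ s, P v ≠ 0) (hA : ∀ v ∈ s, A v ≠ 0) (hB : B ≠ 0) :
    ∑ v ∈ s, Q v * log (Q v / (A v * P v / B)) =
      ∑ v ∈ s, Q v * log (Q v / P v) + ((∑ v ∈ s, Q v) * log B - ∑ v ∈ s, Q v * log (A v)) := by
  rw [sum_mul, ← sum_sub_distrib, ← sum_add_distrib]
  refine sum_congr rfl fun v hv => ?_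
  rw [mul_log_div_reweight_eq _ _ _ _ (hP v hv) (hA v hv) hB]
  ring

theorem exists_log_one_add_mul_lt_mul_log_one_add {p q : ℝ} (hp : 0 < p) (hpq : p < q) :
    ∃ t > 0, log (1 + t * p) < q * log (1 + t) := by
  set t := (q - p) / (2 * p)
  have ht : 0 < t := div_pos (by linarith) (by linarith)
  have h1t : 0 < 1 + t := by linarith
  have hmid : p * (1 + t) = (p + q) / 2 := by
    simp only [t]
    field_simp
    ring
  have hupper : log (1 + t * p) ≤ t * p := by
    linarith [log_le_sub_one_of_pos (by positivity : 0 < 1 + t * p)]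
  have hlower : t / (1 + t) ≤ log (1 + t) := by
    have h := one_sub_inv_le_log_of_pos h1t
    have hrw : 1 - (1 + t)⁻¹ = t / (1 + t) := by field_simp; ring
    rwa [hrw] at h
  have hgap : t * p < q * (t / (1 + t)) := by
    rw [mul_div_assoc', lt_div_iff₀ h1t]
    nlinarith
  have hscaled := mul_le_mul_of_nonneg_left hlower (by linarith : 0 ≤ q)
  exact ⟨t, ht, by linarith⟩

theorem exists_lambda_decreasing_KL_general (S : Type*) [Fintype S] [DecidableEq S]
    (Q P : S → ℝ)
    (hQ1 : ∑ v, Q v = 1)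
    (hP0 : ∀ v, 0 < P v)
    (vhat : S) (hPQ : P vhat < Q vhat) :
    ∃ lam : ℝ,
      ∑ v, Q v * Real.log (Q v /
          ((1 + Real.exp lam * (if v = vhat then (1 : ℝ) else 0)) * P v /
            (1 + Real.exp lam * P vhat)))
        < ∑ v, Q v * Real.log (Q v / P v) := by
  obtain ⟨t, ht, hlog⟩ := exists_log_one_add_mul_lt_mul_log_one_add (hP0 vhat) hPQ
  refine ⟨log t, ?_⟩
  have hA : ∀ v ∈ univ, 1 + t * (if v = vhat then (1 : ℝ) else 0) ≠ 0 := fun v _ => by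
    split_ifs <;> positivity
  have hsum_log_A : ∑ v, Q v * log (1 + t * (if v = vhat then (1 : ℝ) else 0)) =
      Q vhat * log (1 + t) :=
    (Fintype.sum_eq_single vhat fun v hv => by simp [hv]).trans (by simp)
  rw [exp_log ht, sum_mul_log_div_reweight_eq _ _ _ _ _ (fun v _ => (hP0 v).ne') hA
    (by have := hP0 vhat; positivity), hQ1, hsum_log_A]
  linarith

theorem exists_lambda_decreasing_KL (S : Type*) [Fintype S] [DecidableEq S]
    (Q P : S → ℝ)
    (hQ0 : ∀ v, 0 ≤ Q v) (hQ1 : ∑ v, Q v = 1)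
    (hP0 : ∀ v, 0 < P v) (hP1 : ∑ v, P v = 1)
    (vhat : S) (hQv0 : 0 < Q vhat) (hQv1 : Q vhat < 1) (hPQ : P vhat < Q vhat) :
    ∃ lam : ℝ,
      ∑ v, Q v * Real.log (Q v /
          ((1 + Real.exp lam * (if v = vhat then (1 : ℝ) else 0)) * P v /
            (1 + Real.exp lam * P vhat)))
        < ∑ v, Q v * Real.log (Q v / P v) :=
  exists_lambda_decreasing_KL_general S Q P hQ1 hP0 vhat hPQ
end
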